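/- Let Xₙ* be the maximum of n iid St. Petersburg random variables, and set γₙ = n/2^{⌈log₂ n⌉}. Then sup_{j ∈ ℤ} |P{Xₙ* = 2^{⌈log₂ n⌉ + j}} - e^{-γₙ 2^{-j}}(1 - e^{-γₙ 2^{-j}})| = O(1/n) as n → ∞. -/

import Mathlib

/-!
Write `p = 2⁻ᴹ` with `M = ⌈log₂ n⌉ + j`, so that `γₙ 2⁻ʲ = n p`. A St. Petersburg variable
satisfies `P(X ≤ 2ᴹ) = 1 - p` and `P(X < 2ᴹ) = 1 - 2p`, hence by independence
`P(Xₙ* = 2ᴹ) = (1 - p)ⁿ - (1 - 2p)ⁿ`, while `e^{-np}(1 - e^{-np}) = e^{-np} - e^{-2np}`.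
It remains to see that `0 ≤ e^{-nq} - (1 - q)ⁿ ≤ 6/n` uniformly in `q ∈ [0, 1]`: comparing
the `n`-th powers of `1 - q ≤ e^{-q}` gives the bound `n q² e^{-(n-1)q}`, and `t² e^{-t} ≤ 2`.
-/

open MeasureTheory ProbabilityTheory Real

lemma sq_mul_exp_neg_le_two {t : ℝ} (ht : 0 ≤ t) : t ^ 2 * exp (-t) ≤ 2 := by
  have h := Real.pow_div_factorial_le_exp t ht 2
  rw [exp_neg, ← div_eq_mul_inv, div_le_iff₀ (exp_pos t)]
  norm_num [Nat.factorial] at h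
  linarith

lemma one_sub_pow_le_exp_neg_mul {p : ℝ} (hp : p ≤ 1) (n : ℕ) :
    (1 - p) ^ n ≤ exp (-(n * p)) := by
  rw [neg_mul_eq_mul_neg, exp_nat_mul]
  exact pow_le_pow_left₀ (by linarith) (one_sub_le_exp_neg p) n

lemma exp_neg_sub_one_sub_le_sq {p : ℝ} (hp0 : 0 ≤ p) (hp1 : p ≤ 1) :
    exp (-p) - (1 - p) ≤ p ^ 2 := by
  have h := abs_exp_sub_one_sub_id_le (x := -p) (by rw [abs_neg, abs_of_nonneg hp0]; exact hp1)
  rw [neg_sq] at h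
  linarith [le_abs_self (exp (-p) - 1 - -p)]

lemma exp_neg_mul_sub_one_sub_pow_le {p : ℝ} (hp0 : 0 ≤ p) (hp1 : p ≤ 1) (n : ℕ) :
    exp (-(n * p)) - (1 - p) ^ n ≤ 6 / n := by
  rcases Nat.eq_zero_or_pos n with rfl | hn
  · simp
  have hpow : exp (-p) ^ (n - 1) ≤ 3 * exp (-(n * p)) := by
    calc exp (-p) ^ (n - 1) = exp (-(n * p)) * exp p := by
          rw [← exp_nat_mul, ← exp_add, Nat.cast_pred hn]; ring_nf
      _ ≤ exp (-(n * p)) * 3 := by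
          gcongr
          exact (exp_le_exp.2 hp1).trans (exp_one_lt_d9.le.trans (by norm_num))
      _ = 3 * exp (-(n * p)) := mul_comm _ _
  have hle : 1 - p ≤ exp (-p) := one_sub_le_exp_neg p
  have hdiff := abs_pow_sub_pow_le (exp (-p)) (1 - p) n
  rw [abs_of_pos (exp_pos _), abs_of_nonneg (by linarith : 0 ≤ 1 - p), max_eq_left hle,
    ← exp_nat_mul, ← neg_mul_eq_mul_neg] at hdiff
  calc exp (-(n * p)) - (1 - p) ^ n
      ≤ |exp (-p) - (1 - p)| * n * exp (-p) ^ (n - 1) := (le_abs_self _).trans hdiff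
    _ ≤ p ^ 2 * n * (3 * exp (-(n * p))) := by
        gcongr
        rw [abs_of_nonneg (by linarith)]
        exact exp_neg_sub_one_sub_le_sq hp0 hp1
    _ = 3 * ((n * p) ^ 2 * exp (-(n * p))) / n := by field_simp
    _ ≤ 3 * 2 / n := by gcongr; exact sq_mul_exp_neg_le_two (by positivity)
    _ = 6 / n := by norm_num

lemma abs_one_sub_pow_sub_one_sub_two_mul_pow_sub_exp_le {p : ℝ} (hp0 : 0 ≤ p) (hp : 2 * p ≤ 1)
    (n : ℕ) :
    |((1 - p) ^ n - (1 - 2 * p) ^ n) - exp (-(n * p)) * (1 - exp (-(n * p)))| ≤ 6 / n := by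
  have hsq : exp (-(n * p)) * exp (-(n * p)) = exp (-(n * (2 * p))) := by
    rw [← exp_add]; ring_nf
  rw [mul_one_sub, hsq, abs_le]
  have := exp_neg_mul_sub_one_sub_pow_le hp0 (by linarith) n
  have := exp_neg_mul_sub_one_sub_pow_le (by linarith) hp n
  have := one_sub_pow_le_exp_neg_mul (by linarith : p ≤ 1) n
  have := one_sub_pow_le_exp_neg_mul hp n
  constructor <;> linarith

section Order

variable {Ω β : Type*} [MeasurableSpace Ω] {μ : Measure Ω} [LinearOrder β] [MeasurableSpace β]
  [TopologicalSpace β] [OrderClosedTopology β] [OpensMeasurableSpace β]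

lemma measureReal_eq_sub_measureReal_lt [IsFiniteMeasure μ] {Z : Ω → β} (hZ : Measurable Z)
    (c : β) : μ.real {ω | Z ω = c} = μ.real {ω | Z ω ≤ c} - μ.real {ω | Z ω < c} := by
  have hsdiff : {ω | Z ω = c} = {ω | Z ω ≤ c} \ {ω | Z ω < c} := by
    ext ω; simp [le_antisymm_iff]
  rw [hsdiff, measureReal_sdiff (Set.ofPred_subset_ofPred.2 fun ω => le_of_lt)
    (hZ measurableSet_Iio)]

variable {ι : Type*} {X : ι → Ω → β}

lemma ProbabilityTheory.iIndepFun.measureReal_sup'_le (hind : iIndepFun X μ) {s : Finset ι}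
    (hs : s.Nonempty) (c : β) :
    μ.real {ω | s.sup' hs (fun i => X i ω) ≤ c} = ∏ i ∈ s, μ.real {ω | X i ω ≤ c} := by
  have hset : {ω | s.sup' hs (fun i => X i ω) ≤ c} = ⋂ i ∈ s, X i ⁻¹' Set.Iic c := by
    ext ω; simp [Finset.sup'_le_iff]
  rw [hset, measureReal_def, hind.meas_biInter fun i _ => ⟨_, measurableSet_Iic, rfl⟩,
    ENNReal.toReal_prod]
  rfl

lemma ProbabilityTheory.iIndepFun.measureReal_sup'_lt (hind : iIndepFun X μ) {s : Finset ι}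
    (hs : s.Nonempty) (c : β) :
    μ.real {ω | s.sup' hs (fun i => X i ω) < c} = ∏ i ∈ s, μ.real {ω | X i ω < c} := by
  have hset : {ω | s.sup' hs (fun i => X i ω) < c} = ⋂ i ∈ s, X i ⁻¹' Set.Iio c := by
    ext ω; simp [Finset.sup'_lt_iff]
  rw [hset, measureReal_def, hind.meas_biInter fun i _ => ⟨_, measurableSet_Iio, rfl⟩,
    ENNReal.toReal_prod]
  rfl

end Order

def HasStPetersburgLaw {Ω : Type*} [MeasurableSpace Ω] (Y : Ω → ℝ) (μ : Measure Ω) : Prop :=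
  ∀ k : ℕ, 1 ≤ k → μ {ω | Y ω = 2 ^ k} = 1 / 2 ^ k

namespace HasStPetersburgLaw

variable {Ω : Type*} [MeasurableSpace Ω] {μ : Measure Ω} {Y : Ω → ℝ}

lemma measure_iUnion_eq_two_pow_add (h : HasStPetersburgLaw Y μ) (hY : Measurable Y) (M : ℕ) :
    μ (⋃ k : ℕ, {ω | Y ω = 2 ^ (M + k + 1)}) = (2 ^ M)⁻¹ := by
  have hdisj : Pairwise (Function.onFun Disjoint fun k : ℕ => {ω | Y ω = 2 ^ (M + k + 1)}) :=
    fun k l hkl => Set.disjoint_left.2 fun ω hk hl => hkl <| by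
      have := pow_right_injective₀ two_pos (by norm_num : (2 : ℝ) ≠ 1) (hk.symm.trans hl)
      omega
  rw [measure_iUnion hdisj fun k => hY (measurableSet_singleton _)]
  have hterm : ∀ k : ℕ, μ {ω | Y ω = 2 ^ (M + k + 1)} = 2⁻¹ ^ (M + 1) * 2⁻¹ ^ k := by
    intro k
    rw [h _ (by omega), one_div, ENNReal.inv_pow, ← pow_add, add_right_comm]
  rw [tsum_congr hterm, ENNReal.tsum_mul_left, ENNReal.tsum_geometric, ENNReal.one_sub_inv_two,
    inv_inv, pow_succ, mul_assoc, ENNReal.inv_mul_cancel two_ne_zero ENNReal.ofNat_ne_top,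
    mul_one, ENNReal.inv_pow]

lemma ae_exists_eq_two_pow_succ [IsProbabilityMeasure μ] (h : HasStPetersburgLaw Y μ)
    (hY : Measurable Y) : ∀ᵐ ω ∂μ, ∃ k : ℕ, Y ω = 2 ^ (k + 1) := by
  have hfull := h.measure_iUnion_eq_two_pow_add hY 0
  simp only [zero_add, pow_zero, inv_one] at hfull
  have hmeas : MeasurableSet (⋃ k : ℕ, {ω | Y ω = 2 ^ (k + 1)}) :=
    MeasurableSet.iUnion fun k => hY (measurableSet_singleton _)
  simpa using (ae_mem_iff_measure_eq hmeas.nullMeasurableSet).2 (by rw [hfull, measure_univ])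

lemma measureReal_le_two_pow [IsProbabilityMeasure μ] (h : HasStPetersburgLaw Y μ)
    (hY : Measurable Y) (M : ℕ) : μ.real {ω | Y ω ≤ 2 ^ M} = 1 - (2 ^ M)⁻¹ := by
  have htail : ({ω | Y ω ≤ 2 ^ M}ᶜ : Set Ω) =ᵐ[μ]
      (⋃ k : ℕ, {ω | Y ω = 2 ^ (M + k + 1)} : Set Ω) := by
    refine Filter.eventuallyEq_set.2 ?_
    filter_upwards [h.ae_exists_eq_two_pow_succ hY] with ω ⟨k, hk⟩
    have hlt : (2 : ℝ) ^ M < 2 ^ (k + 1) ↔ M < k + 1 := pow_lt_pow_iff_right₀ one_lt_two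
    simp only [Set.mem_compl_iff, Set.mem_ofPred_eq, not_le, Set.mem_iUnion, hk, hlt]
    refine ⟨fun hMk => ⟨k - M, by congr 1; omega⟩, fun ⟨i, hi⟩ => ?_⟩
    have := pow_right_injective₀ two_pos (by norm_num : (2 : ℝ) ≠ 1) hi
    omega
  have hcompl := probReal_compl_eq_one_sub (μ := μ) (measurableSet_le hY measurable_const :
    MeasurableSet {ω | Y ω ≤ 2 ^ M})
  rw [measureReal_congr htail, measureReal_def, h.measure_iUnion_eq_two_pow_add hY,
    ENNReal.toReal_inv, ENNReal.toReal_pow, ENNReal.toReal_ofNat] at hcompl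
  linarith

lemma measureReal_lt_two_pow [IsProbabilityMeasure μ] (h : HasStPetersburgLaw Y μ)
    (hY : Measurable Y) {M : ℕ} (hM : 1 ≤ M) : μ.real {ω | Y ω < 2 ^ M} = 1 - 2 * (2 ^ M)⁻¹ := by
  have hsdiff : {ω | Y ω < 2 ^ M} = {ω | Y ω ≤ 2 ^ M} \ {ω | Y ω = 2 ^ M} := by
    ext ω; simp [lt_iff_le_and_ne]
  have hatom : μ.real {ω | Y ω = 2 ^ M} = (2 ^ M)⁻¹ := by
    rw [measureReal_def, h M hM, one_div, ENNReal.toReal_inv, ENNReal.toReal_pow]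
    norm_num
  rw [hsdiff, measureReal_sdiff (Set.ofPred_subset_ofPred.2 fun ω => le_of_eq)
    (hY (measurableSet_singleton _)), h.measureReal_le_two_pow hY, hatom]
  ring

end HasStPetersburgLaw

theorem stmt_8 {Ω : Type*} [MeasureSpace Ω] [IsProbabilityMeasure (ℙ : Measure Ω)]
    (X : ℕ → Ω → ℝ) (hX : ∀ i, Measurable (X i))
    (hind : iIndepFun X ℙ)
    (hpmf : ∀ i, ∀ k : ℕ, 1 ≤ k → ℙ {ω | X i ω = 2 ^ k} = 1 / 2 ^ k) :
    ∃ C : ℝ, ∀ n : ℕ, ∀ hn : 1 ≤ n, ∀ j : ℤ, 1 ≤ ⌈logb 2 n⌉ + j →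
      |(ℙ {ω | ((Finset.range n).sup'
            (Finset.nonempty_range_iff.mpr (by omega)) fun i => X i ω)
            = (2 : ℝ) ^ (⌈logb 2 n⌉ + j)}).toReal
          - Real.exp (-((n : ℝ) / 2 ^ ⌈logb 2 (n : ℝ)⌉) * 2 ^ (-j))
            * (1 - Real.exp (-((n : ℝ) / 2 ^ ⌈logb 2 (n : ℝ)⌉) * 2 ^ (-j)))|
        ≤ C / n := by
  refine ⟨6, fun n hn j hj => ?_⟩
  obtain ⟨M, hM⟩ : ∃ M : ℕ, (M : ℤ) = ⌈logb 2 n⌉ + j := ⟨_, Int.toNat_of_nonneg (by omega)⟩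
  have hne : (Finset.range n).Nonempty := Finset.nonempty_range_iff.mpr (by omega)
  have hmax : Measurable fun ω => (Finset.range n).sup' hne fun i => X i ω := by
    simp_rw [← Finset.sup'_apply]; exact Finset.measurable_sup' hne fun i _ => hX i
  have hrate : (n : ℝ) / 2 ^ ⌈logb 2 (n : ℝ)⌉ * 2 ^ (-j) = n * (2 ^ M)⁻¹ := by
    rw [div_eq_mul_inv, mul_assoc, ← zpow_neg, ← zpow_add₀ two_ne_zero, ← neg_add, ← hM, zpow_neg,
      zpow_natCast]
  have hlaw : ∀ i, HasStPetersburgLaw (X i) ℙ := hpmf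
  rw [← hM, zpow_natCast, neg_mul, hrate, ← measureReal_def,
    measureReal_eq_sub_measureReal_lt hmax, hind.measureReal_sup'_le, hind.measureReal_sup'_lt,
    Finset.prod_congr rfl fun i _ => (hlaw i).measureReal_le_two_pow (hX i) M,
    Finset.prod_congr rfl fun i _ => (hlaw i).measureReal_lt_two_pow (hX i) (by omega : 1 ≤ M),
    Finset.prod_const, Finset.prod_const, Finset.card_range]
  refine abs_one_sub_pow_sub_one_sub_two_mul_pow_sub_exp_le (by positivity) ?_ n
  rw [← div_eq_mul_inv, div_le_one (by positivity)]
  exact le_self_pow₀ one_le_two (by omega)
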